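/- For every complex number z = x + iy and every positive integer n, the derivative of the normalized Hermite function satisfies |ζ_n'(z)| ≤ (2e³/π²)^{1/4} · e^{|z|²/2 + x² + |y|} · (1 + √(2n)) · e^{2n|y|}. -/

import Mathlib

/-!
Write `ζ_n(z) = c_n (-1)^n e^{-z²/2} H_n(z)` with `H_n` the physicists' Hermite polynomial.
Since `H_n' = 2n H_{n-1}`, we get `ζ_n' = -z ζ_n - √(2n) ζ_{n-1}`, so it suffices to show
`|ζ_m(z)| ≤ π^{-1/4} e^{y²/2 + x² + √(2m)|y|}` for `z = x + iy`.

On the real line, the Hermite equation `H_k'' = 2x H_k' - 2k H_k` shows that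
`E(x) = e^{-3x²} (2k H_k(x)² + H_k'(x)²)` has derivative `-2x e^{-3x²} (6k H_k² + H_k'²)`, so `E` is
maximal at `0`, where it is at most `2k · 2^k k!`; hence `H_k(x)² ≤ 2^k k! e^{3x²}`.
Off the real line, Taylor expansion at `x` with `H_m^{(j)} / j! = 2^j C(m, j) H_{m-j}` bounds
`|H_m(x + iy)|` by `√(2^m m!) e^{3x²/2} ∑_j (√(2m) |y|)^j / j!`.
-/

open Complex Real

noncomputable def hermiteH (n : ℕ) (z : ℂ) : ℂ :=
  (-1) ^ n * Complex.exp (z ^ 2) * iteratedDeriv n (fun w => Complex.exp (-w ^ 2)) z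

noncomputable def zetaH (n : ℕ) (z : ℂ) : ℂ :=
  (((Real.pi ^ ((1 : ℝ) / 4) * 2 ^ ((n : ℝ) / 2) * Real.sqrt (n.factorial))⁻¹ : ℝ) : ℂ) *
    (-1) ^ n * Complex.exp (-z ^ 2 / 2) * hermiteH n z

open Polynomial
open scoped Nat

noncomputable def physHermite : ℕ → ℝ[X]
  | 0 => 1
  | n + 1 => 2 * X * physHermite n - derivative (physHermite n)

@[simp]
lemma physHermite_zero : physHermite 0 = 1 := rfl

lemma physHermite_succ (n : ℕ) :
    physHermite (n + 1) = 2 * X * physHermite n - derivative (physHermite n) := rfl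

lemma derivative_physHermite_succ (n : ℕ) :
    derivative (physHermite (n + 1)) = 2 * (n + 1) * physHermite n := by
  induction n with
  | zero => simp [physHermite_succ]
  | succ n ih =>
    have h : derivative (physHermite n) = 2 * X * physHermite n - physHermite (n + 1) := by
      rw [physHermite_succ]; ring
    rw [physHermite_succ (n + 1), derivative_sub, derivative_mul, ih]
    simp only [derivative_mul, derivative_ofNat, derivative_X, derivative_add, derivative_one,
      derivative_natCast, h]
    push_cast
    ring

-- at `n = 0` the factor `2n` vanishes, so the truncated `n - 1` is harmless
lemma derivative_physHermite (n : ℕ) :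
    derivative (physHermite n) = (2 * n : ℝ[X]) * physHermite (n - 1) := by
  cases n with
  | zero => simp
  | succ n => simpa using derivative_physHermite_succ n

lemma physHermite_succ_succ (n : ℕ) :
    physHermite (n + 2) = 2 * X * physHermite (n + 1) - (2 * (n + 1) : ℝ[X]) * physHermite n := by
  rw [physHermite_succ (n + 1), derivative_physHermite_succ]

lemma derivative_derivative_physHermite (n : ℕ) :
    derivative (derivative (physHermite n)) =
      2 * X * derivative (physHermite n) - (2 * n : ℝ[X]) * physHermite n := by
  have h := derivative_physHermite_succ n
  simp only [physHermite_succ, derivative_sub, derivative_mul, derivative_ofNat, derivative_X] at h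
  linear_combination -h

lemma natDegree_physHermite_le (n : ℕ) : (physHermite n).natDegree ≤ n := by
  induction n with
  | zero => simp
  | succ n ih =>
    rw [physHermite_succ]
    refine (natDegree_sub_le _ _).trans (max_le ?_ ((natDegree_derivative_le _).trans (by omega)))
    refine natDegree_mul_le.trans ?_
    have : (2 * X : ℝ[X]).natDegree ≤ 1 := natDegree_mul_le.trans (by simp)
    omega

lemma iterate_derivative_physHermite (m j : ℕ) :
    derivative^[j] (physHermite m) = (2 ^ j * m.descFactorial j : ℕ) * physHermite (m - j) := by
  induction j with
  | zero => simp
  | succ j ih =>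
    rw [Function.iterate_succ_apply', ih, derivative_natCast_mul, derivative_physHermite,
      Nat.descFactorial_succ, Nat.sub_sub]
    rcases Nat.lt_or_ge j m with h | h
    · push_cast [Nat.cast_sub h.le]; ring
    · simp [Nat.sub_eq_zero_of_le h]

lemma hasseDeriv_physHermite (m j : ℕ) :
    hasseDeriv j (physHermite m) = (2 ^ j * m.choose j : ℕ) * physHermite (m - j) := by
  apply nsmul_right_injective (Nat.factorial_ne_zero j)
  have h := congrFun (factorial_smul_hasseDeriv (R := ℝ) j) (physHermite m)
  simp only [LinearMap.smul_apply] at h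
  simp only [h, iterate_derivative_physHermite, Nat.descFactorial_eq_factorial_mul_choose,
    nsmul_eq_mul]
  push_cast
  ring

lemma eval_zero_physHermite_succ_succ (n : ℕ) :
    (physHermite (n + 2)).eval 0 = -(2 * (n + 1)) * (physHermite n).eval 0 := by
  simp [physHermite_succ_succ]

lemma sq_eval_zero_physHermite_succ_add_le (n : ℕ) :
    (physHermite (n + 1)).eval 0 ^ 2 + 2 * (n + 1) * (physHermite n).eval 0 ^ 2 ≤
      2 ^ (n + 1) * (n + 1)! := by
  induction n with
  | zero => simp [physHermite_succ]
  | succ n ih =>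
    rw [eval_zero_physHermite_succ_succ, Nat.factorial_succ, pow_succ' 2 (n + 1)]
    push_cast at ih ⊢
    have h := mul_le_mul_of_nonneg_left ih (by positivity : (0 : ℝ) ≤ 2 * (n + 2))
    nlinarith [mul_nonneg (by positivity : (0 : ℝ) ≤ n + 1) (sq_nonneg ((physHermite n).eval 0))]

lemma apply_le_apply_zero_of_mul_deriv_nonpos {f f' : ℝ → ℝ} (hf : ∀ x, HasDerivAt f (f' x) x)
    (hsign : ∀ x, x * f' x ≤ 0) (x : ℝ) : f x ≤ f 0 := by
  have hcont : Continuous f := continuous_iff_continuousAt.2 fun x => (hf x).continuousAt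
  rcases le_total 0 x with hx | hx
  · refine antitoneOn_of_hasDerivWithinAt_nonpos (convex_Ici 0) hcont.continuousOn
      (fun y _ => (hf y).hasDerivWithinAt) (fun y hy => ?_) Set.self_mem_Ici hx hx
    rw [interior_Ici, Set.mem_Ioi] at hy
    exact nonpos_of_mul_nonpos_right (hsign y) hy
  · refine monotoneOn_of_hasDerivWithinAt_nonneg (convex_Iic 0) hcont.continuousOn
      (fun y _ => (hf y).hasDerivWithinAt) (fun y hy => ?_) hx Set.self_mem_Iic hx
    rw [interior_Iic, Set.mem_Iio] at hy
    exact nonneg_of_mul_nonpos_right (hsign y) hy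

noncomputable def hermiteEnergy (k : ℕ) (x : ℝ) : ℝ :=
  Real.exp (-3 * x ^ 2) *
    (2 * k * (physHermite k).eval x ^ 2 + (derivative (physHermite k)).eval x ^ 2)

lemma hasDerivAt_hermiteEnergy (k : ℕ) (x : ℝ) :
    HasDerivAt (hermiteEnergy k) (-2 * x * Real.exp (-3 * x ^ 2) *
      (6 * k * (physHermite k).eval x ^ 2 + (derivative (physHermite k)).eval x ^ 2)) x := by
  have hweight : HasDerivAt (fun x : ℝ => Real.exp (-3 * x ^ 2))
      (-6 * x * Real.exp (-3 * x ^ 2)) x :=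
    (((hasDerivAt_pow 2 x).const_mul (-3 : ℝ)).exp).congr_deriv (by norm_num; ring)
  have hode : (derivative (derivative (physHermite k))).eval x =
      2 * x * (derivative (physHermite k)).eval x - 2 * k * (physHermite k).eval x := by
    simp [derivative_derivative_physHermite]
  refine (hweight.mul ((((physHermite k).hasDerivAt x).fun_pow 2).const_mul (2 * k : ℝ) |>.fun_add
    (((derivative (physHermite k)).hasDerivAt x).fun_pow 2))).congr_deriv ?_
  rw [hode]
  push_cast
  ring

lemma hermiteEnergy_le_hermiteEnergy_zero (k : ℕ) (x : ℝ) :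
    hermiteEnergy k x ≤ hermiteEnergy k 0 := by
  refine apply_le_apply_zero_of_mul_deriv_nonpos (hasDerivAt_hermiteEnergy k) (fun y => ?_) x
  have : 0 ≤ 2 * y ^ 2 * Real.exp (-3 * y ^ 2) *
      (6 * k * (physHermite k).eval y ^ 2 + (derivative (physHermite k)).eval y ^ 2) := by
    positivity
  linear_combination this

lemma sq_eval_physHermite_le (k : ℕ) (x : ℝ) :
    (physHermite k).eval x ^ 2 ≤ 2 ^ k * k ! * Real.exp (3 * x ^ 2) := by
  cases k with
  | zero => simpa using Real.one_le_exp (by positivity : 0 ≤ 3 * x ^ 2)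
  | succ k =>
    have hweighted : Real.exp (-3 * x ^ 2) * (physHermite (k + 1)).eval x ^ 2 ≤
        2 ^ (k + 1) * (k + 1)! := by
      have hzero : hermiteEnergy (k + 1) 0 = 2 * (k + 1) * ((physHermite (k + 1)).eval 0 ^ 2 +
          2 * (k + 1) * (physHermite k).eval 0 ^ 2) := by
        simp [hermiteEnergy, derivative_physHermite_succ]
        ring
      have hlower : 2 * (k + 1) * (Real.exp (-3 * x ^ 2) * (physHermite (k + 1)).eval x ^ 2) ≤
          hermiteEnergy (k + 1) x := by
        unfold hermiteEnergy
        push_cast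
        nlinarith [mul_nonneg (Real.exp_pos (-3 * x ^ 2)).le
          (sq_nonneg ((derivative (physHermite (k + 1))).eval x))]
      have h := (hlower.trans (hermiteEnergy_le_hermiteEnergy_zero (k + 1) x)).trans_eq hzero
      exact (le_of_mul_le_mul_left h (by positivity)).trans
        (sq_eval_zero_physHermite_succ_add_le k)
    calc (physHermite (k + 1)).eval x ^ 2
        = Real.exp (3 * x ^ 2) * (Real.exp (-3 * x ^ 2) * (physHermite (k + 1)).eval x ^ 2) := by
          rw [← mul_assoc, ← Real.exp_add]; simp
      _ ≤ Real.exp (3 * x ^ 2) * (2 ^ (k + 1) * (k + 1)!) :=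
          mul_le_mul_of_nonneg_left hweighted (Real.exp_pos _).le
      _ = _ := mul_comm _ _

lemma abs_eval_physHermite_le (k : ℕ) (x : ℝ) :
    |(physHermite k).eval x| ≤ √(2 ^ k * k !) * Real.exp (3 * x ^ 2 / 2) := by
  rw [Real.exp_half, ← Real.sqrt_mul (by positivity)]
  exact Real.abs_le_sqrt (sq_eval_physHermite_le k x)

lemma iteratedDeriv_cexp_neg_sq (n : ℕ) :
    iteratedDeriv n (fun w : ℂ => Complex.exp (-w ^ 2)) =
      fun z => (-1) ^ n * aeval z (physHermite n) * Complex.exp (-z ^ 2) := by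
  induction n with
  | zero => simp
  | succ n ih =>
    funext z
    have hgauss : HasDerivAt (fun z : ℂ => Complex.exp (-z ^ 2))
        (-2 * z * Complex.exp (-z ^ 2)) z :=
      ((hasDerivAt_pow 2 z).neg.cexp).congr_deriv (by norm_num; ring)
    rw [iteratedDeriv_succ, ih,
      ((((physHermite n).hasDerivAt_aeval z).const_mul ((-1) ^ n)).fun_mul hgauss).deriv,
      physHermite_succ]
    simp only [map_sub, map_mul, aeval_X, map_ofNat]
    ring

lemma hermiteH_eq_aeval (n : ℕ) (z : ℂ) : hermiteH n z = aeval z (physHermite n) := by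
  have hexp : Complex.exp (z ^ 2) * Complex.exp (-z ^ 2) = 1 := by rw [← Complex.exp_add]; simp
  have hsign : ((-1 : ℂ) ^ n) * (-1) ^ n = 1 := by rw [← mul_pow]; simp
  rw [hermiteH, iteratedDeriv_cexp_neg_sq]
  linear_combination (aeval z (physHermite n) * Complex.exp (z ^ 2) * Complex.exp (-z ^ 2)) * hsign
    + aeval z (physHermite n) * hexp

lemma choose_sq_mul_factorial_sq_mul_factorial_le (m j : ℕ) (hj : j ≤ m) :
    m.choose j ^ 2 * j ! ^ 2 * (m - j)! ≤ m ! * m ^ j := by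
  calc m.choose j ^ 2 * j ! ^ 2 * (m - j)!
        = (j ! * m.choose j) * (m.choose j * j ! * (m - j)!) := by ring
    _ = m.descFactorial j * m ! := by
        rw [Nat.choose_mul_factorial_mul_factorial hj, Nat.descFactorial_eq_factorial_mul_choose]
    _ ≤ m ^ j * m ! := Nat.mul_le_mul_right _ (Nat.descFactorial_le_pow m j)
    _ = m ! * m ^ j := mul_comm _ _

lemma two_pow_mul_choose_mul_sqrt_le (m j : ℕ) (hj : j ≤ m) :
    2 ^ j * m.choose j * √(2 ^ (m - j) * (m - j)!) ≤ √(2 ^ m * m !) * √(2 * m) ^ j / j ! := by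
  have hcore : ((m.choose j ^ 2 * j ! ^ 2 * (m - j)! : ℕ) : ℝ) ≤ (m ! * m ^ j : ℕ) := by
    exact_mod_cast choose_sq_mul_factorial_sq_mul_factorial_le m j hj
  push_cast at hcore
  rw [le_div_iff₀ (by positivity)]
  refine (pow_le_pow_iff_left₀ (by positivity) (by positivity) two_ne_zero).mp ?_
  have hpow : (2 : ℝ) ^ j * 2 ^ j * 2 ^ (m - j) = 2 ^ m * 2 ^ j := by
    rw [mul_assoc, ← pow_add, ← pow_add, ← pow_add]; congr 1; omega
  calc (2 ^ j * m.choose j * √(2 ^ (m - j) * (m - j)!) * j !) ^ 2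
      = ((2 : ℝ) ^ j * 2 ^ j * 2 ^ (m - j)) * (m.choose j ^ 2 * j ! ^ 2 * (m - j)!) := by
        rw [mul_pow, mul_pow, mul_pow, Real.sq_sqrt (by positivity)]; ring
    _ ≤ ((2 : ℝ) ^ m * 2 ^ j) * (m ! * m ^ j) := by rw [hpow]; gcongr
    _ = (√(2 ^ m * m !) * √(2 * m) ^ j) ^ 2 := by
        rw [mul_pow, Real.sq_sqrt (by positivity), ← pow_mul, mul_comm j, pow_mul,
          Real.sq_sqrt (by positivity)]
        ring

lemma norm_aeval_physHermite_le (m : ℕ) (z : ℂ) :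
    ‖aeval z (physHermite m)‖ ≤
      √(2 ^ m * m !) * Real.exp (3 * z.re ^ 2 / 2) * Real.exp (√(2 * m) * |z.im|) := by
  set A := √(2 ^ m * m !) * Real.exp (3 * z.re ^ 2 / 2)
  have htaylor : aeval z (physHermite m) = ∑ j ∈ Finset.range (m + 1),
      (taylor z.re (physHermite m)).coeff j • ((z.im : ℂ) * I) ^ j := by
    rw [← aeval_eq_sum_range' (Nat.lt_succ_of_le ((natDegree_taylor _ _).trans_le
      (natDegree_physHermite_le m))), taylor_apply, aeval_comp]
    simp [add_comm, Complex.re_add_im]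
  have hterm : ∀ j ∈ Finset.range (m + 1),
      ‖(taylor z.re (physHermite m)).coeff j • ((z.im : ℂ) * I) ^ j‖ ≤
        A * ((√(2 * m) * |z.im|) ^ j / j !) := by
    intro j hj
    have hjm : j ≤ m := Nat.lt_succ_iff.mp (Finset.mem_range.mp hj)
    rw [taylor_coeff, hasseDeriv_physHermite, norm_smul, norm_pow, norm_mul, Complex.norm_I,
      Complex.norm_real, mul_one, Real.norm_eq_abs, Real.norm_eq_abs, eval_mul, eval_natCast,
      abs_mul, Nat.abs_cast]
    calc ((2 ^ j * m.choose j : ℕ) : ℝ) * |(physHermite (m - j)).eval z.re| * |z.im| ^ j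
        ≤ ((2 ^ j * m.choose j : ℕ) : ℝ) *
            (√(2 ^ (m - j) * (m - j)!) * Real.exp (3 * z.re ^ 2 / 2)) * |z.im| ^ j := by
          gcongr
          exact abs_eval_physHermite_le (m - j) z.re
      _ ≤ (√(2 ^ m * m !) * √(2 * m) ^ j / j !) * Real.exp (3 * z.re ^ 2 / 2) * |z.im| ^ j := by
          rw [← mul_assoc]
          push_cast
          gcongr
          exact two_pow_mul_choose_mul_sqrt_le m j hjm
      _ = A * ((√(2 * m) * |z.im|) ^ j / j !) := by ring
  calc ‖aeval z (physHermite m)‖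
      ≤ ∑ j ∈ Finset.range (m + 1), A * ((√(2 * m) * |z.im|) ^ j / j !) :=
        htaylor ▸ (norm_sum_le _ _).trans (Finset.sum_le_sum hterm)
    _ = A * ∑ j ∈ Finset.range (m + 1), (√(2 * m) * |z.im|) ^ j / j ! := by
        rw [Finset.mul_sum]
    _ ≤ A * Real.exp (√(2 * m) * |z.im|) := by
        gcongr
        exact Real.sum_le_exp_of_nonneg (by positivity) _

noncomputable def hermiteFunction (n : ℕ) (z : ℂ) : ℂ :=
  Complex.exp (-z ^ 2 / 2) * aeval z (physHermite n)

lemma hasDerivAt_hermiteFunction (n : ℕ) (z : ℂ) : HasDerivAt (hermiteFunction n)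
    (-z * hermiteFunction n z + 2 * n * hermiteFunction (n - 1) z) z := by
  have hgauss : HasDerivAt (fun z : ℂ => Complex.exp (-z ^ 2 / 2))
      (-z * Complex.exp (-z ^ 2 / 2)) z :=
    ((hasDerivAt_pow 2 z).neg.div_const 2).cexp.congr_deriv (by norm_num; ring)
  refine (hgauss.fun_mul ((physHermite n).hasDerivAt_aeval z)).congr_deriv ?_
  simp only [hermiteFunction, derivative_physHermite, map_mul, map_natCast, map_ofNat]
  ring

lemma norm_hermiteFunction_le (m : ℕ) (z : ℂ) : ‖hermiteFunction m z‖ ≤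
    √(2 ^ m * m !) * Real.exp (z.im ^ 2 / 2 + z.re ^ 2 + √(2 * m) * |z.im|) := by
  have hre : (-z ^ 2 / 2).re = (z.im ^ 2 - z.re ^ 2) / 2 := by
    simp [sq]
  calc ‖hermiteFunction m z‖
      ≤ Real.exp ((z.im ^ 2 - z.re ^ 2) / 2) *
          (√(2 ^ m * m !) * Real.exp (3 * z.re ^ 2 / 2) * Real.exp (√(2 * m) * |z.im|)) := by
        rw [hermiteFunction, norm_mul, Complex.norm_exp, hre]
        gcongr
        exact norm_aeval_physHermite_le m z
    _ = √(2 ^ m * m !) * Real.exp (z.im ^ 2 / 2 + z.re ^ 2 + √(2 * m) * |z.im|) := by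
        rw [mul_left_comm, mul_assoc, ← Real.exp_add, ← Real.exp_add]
        ring_nf

lemma zetaH_eq (n : ℕ) (z : ℂ) : zetaH n z =
    (((Real.pi ^ ((1 : ℝ) / 4) * √(2 ^ n * n !))⁻¹ : ℝ) : ℂ) * (-1) ^ n * hermiteFunction n z := by
  have hsqrt : (2 : ℝ) ^ ((n : ℝ) / 2) * √(n !) = √(2 ^ n * n !) := by
    rw [Real.sqrt_mul (by positivity)]
    congr 1
    rw [Real.sqrt_eq_rpow, ← Real.rpow_natCast, ← Real.rpow_mul (by norm_num)]
    ring_nf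
  rw [zetaH, hermiteH_eq_aeval, hermiteFunction, mul_assoc (Real.pi ^ _), hsqrt]
  ring

lemma two_mul_mul_sqrt_eq (n : ℕ) :
    2 * n * √(2 ^ (n - 1) * (n - 1)!) = √(2 * n) * √(2 ^ n * n !) := by
  cases n with
  | zero => simp
  | succ n =>
    rw [Nat.add_sub_cancel, pow_succ, Nat.factorial_succ, Nat.cast_mul,
      show (2 : ℝ) ^ n * 2 * (((n + 1 : ℕ) : ℝ) * n !) = (2 * (n + 1 : ℕ)) * (2 ^ n * n !) by ring,
      Real.sqrt_mul (x := 2 * ((n + 1 : ℕ) : ℝ)) (by positivity), ← mul_assoc,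
      Real.mul_self_sqrt (by positivity)]

lemma norm_deriv_zetaH_le (n : ℕ) (z : ℂ) : ‖deriv (zetaH n) z‖ ≤ (Real.pi ^ ((1 : ℝ) / 4))⁻¹ *
    (‖z‖ * Real.exp (z.im ^ 2 / 2 + z.re ^ 2 + √(2 * n) * |z.im|) +
      √(2 * n) * Real.exp (z.im ^ 2 / 2 + z.re ^ 2 + √(2 * (n - 1 : ℕ)) * |z.im|)) := by
  set c := (Real.pi ^ ((1 : ℝ) / 4) * √(2 ^ n * n !))⁻¹
  have hc : 0 ≤ c := by positivity
  rw [show zetaH n = fun w => (c : ℂ) * (-1) ^ n * hermiteFunction n w from funext (zetaH_eq n),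
    ((hasDerivAt_hermiteFunction n z).const_mul _).deriv, norm_mul, norm_mul, norm_pow, norm_neg,
    norm_one, one_pow, mul_one, Complex.norm_real, Real.norm_of_nonneg hc]
  have hcN : c * √(2 ^ n * n !) = (Real.pi ^ ((1 : ℝ) / 4))⁻¹ := by
    have : 0 < √(2 ^ n * n !) := by positivity
    simp only [c]
    field_simp
  have h2n : ‖(2 * n : ℂ)‖ = 2 * n := by simp
  calc c * ‖-z * hermiteFunction n z + 2 * n * hermiteFunction (n - 1) z‖
      ≤ c * (‖z‖ * (√(2 ^ n * n !) * Real.exp (z.im ^ 2 / 2 + z.re ^ 2 + √(2 * n) * |z.im|)) +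
          2 * n * (√(2 ^ (n - 1) * (n - 1)!) *
            Real.exp (z.im ^ 2 / 2 + z.re ^ 2 + √(2 * (n - 1 : ℕ)) * |z.im|))) := by
        refine mul_le_mul_of_nonneg_left ((norm_add_le _ _).trans ?_) hc
        rw [norm_mul, norm_mul, norm_neg, h2n]
        gcongr
        · exact norm_hermiteFunction_le n z
        · exact norm_hermiteFunction_le (n - 1) z
    _ = (c * √(2 ^ n * n !)) *
          (‖z‖ * Real.exp (z.im ^ 2 / 2 + z.re ^ 2 + √(2 * n) * |z.im|) +
            √(2 * n) * Real.exp (z.im ^ 2 / 2 + z.re ^ 2 + √(2 * (n - 1 : ℕ)) * |z.im|)) := by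
        linear_combination (c * Real.exp (z.im ^ 2 / 2 + z.re ^ 2 + √(2 * (n - 1 : ℕ)) * |z.im|)) *
          two_mul_mul_sqrt_eq n
    _ = _ := by rw [hcN]

lemma norm_le_exp_sq_re_add_abs_im (z : ℂ) : ‖z‖ ≤ Real.exp (z.re ^ 2 / 2 + |z.im|) := by
  have hre : |z.re| ≤ 1 + z.re ^ 2 / 2 := by nlinarith [sq_abs z.re, sq_nonneg (|z.re| - 1)]
  calc ‖z‖ ≤ |z.re| + |z.im| := Complex.norm_le_abs_re_add_abs_im z
    _ ≤ (1 + z.re ^ 2 / 2) * (1 + |z.im|) := by nlinarith [abs_nonneg z.im, sq_nonneg z.re]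
    _ ≤ Real.exp (z.re ^ 2 / 2) * Real.exp |z.im| := by
        gcongr <;> linarith [Real.add_one_le_exp (z.re ^ 2 / 2), Real.add_one_le_exp |z.im|]
    _ = Real.exp (z.re ^ 2 / 2 + |z.im|) := (Real.exp_add _ _).symm

lemma sqrt_two_mul_natCast_le (n : ℕ) : √(2 * n) ≤ 2 * n := by
  refine (Real.sqrt_le_left (by positivity)).mpr ?_
  rcases Nat.eq_zero_or_pos n with rfl | hn
  · simp
  · have : (1 : ℝ) ≤ n := by exact_mod_cast hn
    nlinarith

lemma inv_pi_rpow_le :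
    (Real.pi ^ ((1 : ℝ) / 4))⁻¹ ≤ (2 * Real.exp 3 / Real.pi ^ 2) ^ ((1 : ℝ) / 4) := by
  rw [← Real.inv_rpow Real.pi_pos.le]
  gcongr
  rw [le_div_iff₀ (by positivity), sq, ← mul_assoc, inv_mul_cancel₀ Real.pi_pos.ne', one_mul]
  linarith [Real.pi_lt_four, Real.add_one_le_exp 3]

theorem zetaH_deriv_bound_general (z : ℂ) (n : ℕ) :
    ‖deriv (zetaH n) z‖ ≤ (2 * Real.exp 3 / Real.pi ^ 2) ^ ((1 : ℝ) / 4) *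
      Real.exp (‖z‖ ^ 2 / 2 + z.re ^ 2 + |z.im|) * (1 + Real.sqrt (2 * (n : ℝ))) *
      Real.exp (2 * (n : ℝ) * |z.im|) := by
  set E := Real.exp (‖z‖ ^ 2 / 2 + z.re ^ 2 + |z.im| + 2 * n * |z.im|) with hE
  have hnorm : ‖z‖ ^ 2 = z.re ^ 2 + z.im ^ 2 := by
    rw [Complex.sq_norm, Complex.normSq_apply]; ring
  have hsqrt := mul_le_mul_of_nonneg_right (sqrt_two_mul_natCast_le n) (abs_nonneg z.im)
  have hsqrt' : √(2 * (n - 1 : ℕ)) * |z.im| ≤ √(2 * n) * |z.im| := by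
    gcongr
    exact_mod_cast Nat.sub_le n 1
  have hfirst : ‖z‖ * Real.exp (z.im ^ 2 / 2 + z.re ^ 2 + √(2 * n) * |z.im|) ≤ E := by
    refine (mul_le_mul_of_nonneg_right (norm_le_exp_sq_re_add_abs_im z) (by positivity)).trans ?_
    rw [← Real.exp_add, hE, hnorm]
    exact Real.exp_le_exp.2 (by linarith)
  have hsecond : Real.exp (z.im ^ 2 / 2 + z.re ^ 2 + √(2 * (n - 1 : ℕ)) * |z.im|) ≤ E := by
    rw [hE, hnorm]
    exact Real.exp_le_exp.2 (by linarith [abs_nonneg z.im, sq_nonneg z.re])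
  calc ‖deriv (zetaH n) z‖
      ≤ (Real.pi ^ ((1 : ℝ) / 4))⁻¹ * (E + √(2 * n) * E) :=
        (norm_deriv_zetaH_le n z).trans (by gcongr)
    _ ≤ (2 * Real.exp 3 / Real.pi ^ 2) ^ ((1 : ℝ) / 4) * (E + √(2 * n) * E) := by
        gcongr
        exact inv_pi_rpow_le
    _ = _ := by rw [hE, Real.exp_add]; ring

theorem zetaH_deriv_bound (z : ℂ) (n : ℕ) (hn : 1 ≤ n) :
    ‖deriv (zetaH n) z‖ ≤ (2 * Real.exp 3 / Real.pi ^ 2) ^ ((1 : ℝ) / 4) *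
      Real.exp (‖z‖ ^ 2 / 2 + z.re ^ 2 + |z.im|) * (1 + Real.sqrt (2 * (n : ℝ))) *
      Real.exp (2 * (n : ℝ) * |z.im|) :=
  zetaH_deriv_bound_general z n
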